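/- arXiv:1507.00545 — 2 statements merged into one kernel-verified Lean document; each statement's English description precedes it below -/
import Mathlib

section
/- Let V be a rational vector space (ℚ-vector space) and let I ⊆ V be a subset closed under the following 'divisibility' property coming from Minkowski sums: whenever x ∈ V and n ≥ 1 and n·x is a sum y₁ + ⋯ + yₙ with each yᵢ ∈ I, then x ∈ I. Then I is convex: for any y₁, …, yₙ ∈ I and rational coefficients λᵢ ≥ 0 with Σλᵢ = 1, the combination Σλᵢyᵢ lies in I. -/
/-!
Clearing denominators, write `λᵢ = aᵢ / N` with `aᵢ, N ∈ ℕ`, `N > 0` and `∑ aᵢ = N`. Then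
`N • ∑ λᵢ • yᵢ = ∑ aᵢ • yᵢ` is a sum of `N` elements of `I`, namely each `yᵢ` repeated `aᵢ` times,
so the divisibility hypothesis puts `∑ λᵢ • yᵢ` in `I`.
-/

open Finset

theorem exists_common_denominator {ι : Type*} [Fintype ι] {lam : ι → ℚ} (hlam : ∀ i, 0 ≤ lam i) :
    ∃ N : ℕ, 0 < N ∧ ∃ a : ι → ℕ, ∀ i, (a i : ℚ) = N * lam i := by
  refine ⟨∏ i, (lam i).den, prod_pos fun i _ => (lam i).pos, ?_⟩
  choose m hm using fun i => dvd_prod_of_mem (fun i => (lam i).den) (mem_univ i)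
  refine ⟨fun i => m i * (lam i).num.toNat, fun i => ?_⟩
  have hnum : (((lam i).num.toNat : ℤ) : ℚ) = (lam i).num :=
    congrArg _ (Int.toNat_of_nonneg (Rat.num_nonneg.mpr (hlam i)))
  rw [hm i]
  push_cast at hnum ⊢
  rw [hnum, ← Rat.mul_den_eq_num]
  ring

theorem mem_of_card_smul_eq_sum {V : Type*} [AddCommGroup V] [Module ℚ V] {I : Set V}
    (hdiv : ∀ (n : ℕ), 1 ≤ n → ∀ x : V, ∀ y : Fin n → V,
      (∀ i, y i ∈ I) → (n : ℚ) • x = ∑ i, y i → x ∈ I)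
    {ι : Type*} [Fintype ι] (hι : 0 < Fintype.card ι) {x : V} {y : ι → V} (hy : ∀ i, y i ∈ I)
    (hx : (Fintype.card ι : ℚ) • x = ∑ i, y i) : x ∈ I := by
  let e := Fintype.equivFin ι
  refine hdiv _ hι x (y ∘ e.symm) (fun _ => hy _) ?_
  rw [hx]
  exact (e.symm.sum_comp y).symm

/-- If a subset `I` of a ℚ-vector space is closed under 'divisibility' for
Minkowski sums (whenever `n•x = y₁ + ⋯ + yₙ` with all `yᵢ ∈ I` then `x ∈ I`),
then `I` is convex: it is closed under rational convex combinations. -/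
theorem convex_of_minkowski_divisible {V : Type*} [AddCommGroup V] [Module ℚ V]
    (I : Set V)
    (hdiv : ∀ (n : ℕ), 1 ≤ n → ∀ x : V, ∀ y : Fin n → V,
      (∀ i, y i ∈ I) → (n : ℚ) • x = ∑ i, y i → x ∈ I) :
    ∀ (n : ℕ), 1 ≤ n → ∀ (y : Fin n → V) (lam : Fin n → ℚ),
      (∀ i, y i ∈ I) → (∀ i, 0 ≤ lam i) → (∑ i, lam i) = 1 →
      (∑ i, lam i • y i) ∈ I := by
  intro n _ y lam hy hlam hsum
  obtain ⟨N, hN, a, ha⟩ := exists_common_denominator hlam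
  have hcard : Fintype.card (Σ i, Fin (a i)) = N := by
    rw [Fintype.card_sigma]
    simp only [Fintype.card_fin]
    exact_mod_cast show ∑ i, (a i : ℚ) = N by simp only [ha, ← mul_sum, hsum, mul_one]
  refine mem_of_card_smul_eq_sum hdiv (y := fun p : Σ i, Fin (a i) => y p.1) (hcard ▸ hN)
    (fun p => hy p.1) ?_
  rw [hcard, Fintype.sum_sigma, smul_sum]
  refine sum_congr rfl fun i _ => ?_
  rw [smul_smul, ← ha, Nat.cast_smul_eq_nsmul]
  simp only [sum_const, card_univ, Fintype.card_fin]
end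

section
/- Let A be a Noetherian integral domain and I ⊆ J finitely generated nonzero ideals of A such that every element of J is integral over I in the sense of Swanson–Huneke (each z ∈ J satisfies zⁿ + c₁z^{n-1} + ⋯ + cₙ = 0 with cᵢ ∈ Iⁱ). Then there exists n ≥ 0 such that J^{n+1} = I·Jⁿ. -/
open Finset in
lemma prod_mem_pow_card {A : Type*} [CommRing A] (J : Ideal A) {ι : Type*}
    (t : Finset ι) (f : ι → A) (h : ∀ i ∈ t, f i ∈ J) :
    ∏ i ∈ t, f i ∈ J ^ t.card := by
  induction t using Finset.cons_induction with
  | empty => simp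
  | cons a t ha ih =>
    rw [Finset.prod_cons, Finset.card_cons, pow_succ, mul_comm]
    exact Ideal.mul_mem_mul (h a (Finset.mem_cons_self a t))
      (ih fun i hi => h i (Finset.mem_cons_of_mem hi))

/-- Reduction criterion: if `A` is a Noetherian domain and `I ⊆ J` are
finitely generated nonzero ideals with every element of `J` integral over `I`,
then `J^(n+1) = I·Jⁿ` for some `n`. -/
theorem reduction_criterion {A : Type*} [CommRing A] [IsDomain A]
    [IsNoetherianRing A] (I J : Ideal A) (hIJ : I ≤ J)
    (hIfg : I.FG) (hJfg : J.FG) (hI : I ≠ ⊥) (hJ : J ≠ ⊥)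
    (hint : ∀ z ∈ J, ∃ n : ℕ, 1 ≤ n ∧ ∃ c : ℕ → A,
      (∀ i ∈ Finset.Icc 1 n, c i ∈ I ^ i) ∧
      z ^ n + ∑ i ∈ Finset.Icc 1 n, c i * z ^ (n - i) = 0) :
    ∃ n : ℕ, J ^ (n + 1) = I * J ^ n := by
  -- Step 1: each z ∈ J satisfies z ^ n ∈ I * J ^ (n - 1) for some n ≥ 1.
  have key : ∀ z ∈ J, ∃ n : ℕ, 1 ≤ n ∧ z ^ n ∈ I * J ^ (n - 1) := by
    intro z hz
    obtain ⟨n, hn1, c, hc, heq⟩ := hint z hz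
    refine ⟨n, hn1, ?_⟩
    have hz' : z ^ n = -∑ i ∈ Finset.Icc 1 n, c i * z ^ (n - i) := by
      linear_combination heq
    rw [hz']
    refine neg_mem (Ideal.sum_mem _ fun i hi => ?_)
    obtain ⟨hi1, hin⟩ := Finset.mem_Icc.mp hi
    have h1 : c i ∈ I * J ^ (i - 1) := by
      have : I ^ i ≤ I * J ^ (i - 1) := by
        calc I ^ i = I * I ^ (i - 1) := by
              rw [← pow_succ']; congr 1; omega
          _ ≤ I * J ^ (i - 1) := Ideal.mul_mono le_rfl (Ideal.pow_right_mono hIJ _)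
      exact this (hc i hi)
    have h2 : z ^ (n - i) ∈ J ^ (n - i) := Ideal.pow_mem_pow hz _
    have := Ideal.mul_mem_mul h1 h2
    rw [mul_assoc, ← pow_add] at this
    convert this using 3
    omega
  obtain ⟨s, hs⟩ := hJfg
  -- choose exponents for generators
  choose! nz hnz1 hnzmem using key
  set N : ℕ := 1 + ∑ z ∈ s, (nz z - 1) with hN
  refine ⟨N - 1, ?_⟩
  have hN1 : 1 ≤ N := by omega
  have hNs : N - 1 + 1 = N := by omega
  rw [hNs]
  apply le_antisymm
  · -- J ^ N ≤ I * J ^ (N - 1)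
    rw [← hs]; rw [Ideal.span, Submodule.span_pow, Submodule.span_le]
    rintro x hx
    rw [Set.mem_pow] at hx
    obtain ⟨f, hf⟩ := hx
    rw [List.prod_ofFn] at hf
    classical
    have hmem : ∀ i : Fin N, (f i : A) ∈ s := fun i => (f i).2
    have hmemJ : ∀ z ∈ s, z ∈ J := by
      intro z hzs; rw [← hs]; exact Ideal.subset_span hzs
    -- pigeonhole: some z ∈ s has fiber of size ≥ nz z
    by_cases hse : ∃ z ∈ s, nz z ≤ (Finset.univ.filter (fun i => (f i : A) = z)).card
    · obtain ⟨z, hzs, hcard⟩ := hse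
      set T := Finset.univ.filter (fun i : Fin N => (f i : A) = z) with hT
      have hsplit : ∏ i : Fin N, (f i : A) =
          (∏ i ∈ T, (f i : A)) * ∏ i ∈ Finset.univ.filter (fun i => ¬((f i : A) = z)), (f i : A) :=
        (Finset.prod_filter_mul_prod_filter_not _ _ _).symm
      have hTprod : ∏ i ∈ T, (f i : A) = z ^ T.card := by
        rw [Finset.prod_congr rfl (fun i hi => (Finset.mem_filter.mp hi).2)]
        exact Finset.prod_const z
      have hTcard : T.card ≤ N := le_trans (Finset.card_filter_le _ _) (by simp)
      have hcompl : (Finset.univ.filter (fun i => ¬((f i : A) = z))).card = N - T.card := by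
        rw [Finset.filter_not, Finset.card_sdiff_of_subset (Finset.filter_subset _ _)]
        simp [hT]
      -- memberships
      have m1 : z ^ (nz z) ∈ I * J ^ (nz z - 1) := hnzmem z (hmemJ z hzs)
      have m2 : z ^ (T.card - nz z) ∈ J ^ (T.card - nz z) := Ideal.pow_mem_pow (hmemJ z hzs) _
      have m3 : (∏ i ∈ Finset.univ.filter (fun i => ¬((f i : A) = z)), (f i : A)) ∈
          J ^ (N - T.card) := by
        rw [← hcompl]
        exact prod_mem_pow_card J _ _ (fun i _ => hmemJ _ (hmem i))
      have hzpow : z ^ T.card = z ^ (nz z) * z ^ (T.card - nz z) := by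
        rw [← pow_add]; congr 1; omega
      have := Ideal.mul_mem_mul (Ideal.mul_mem_mul m1 m2) m3
      rw [mul_assoc, ← pow_add, mul_assoc, ← pow_add] at this
      have hexp : nz z - 1 + (T.card - nz z + (N - T.card)) = N - 1 := by
        have := hnz1 z (hmemJ z hzs); omega
      rw [hexp] at this
      rw [SetLike.mem_coe, show Submodule.span A (↑s : Set A) = J from hs]
      rw [← hf, hsplit, hTprod, hzpow]
      exact this
    · -- impossible: fibers sum to N
      push_neg at hse
      exfalso
      have hsum : ∑ z ∈ s, (Finset.univ.filter (fun i : Fin N => (f i : A) = z)).card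
          = (Finset.univ : Finset (Fin N)).card :=
        (Finset.card_eq_sum_card_fiberwise (fun i _ => hmem i)).symm
      have hle : ∑ z ∈ s, (Finset.univ.filter (fun i : Fin N => (f i : A) = z)).card
          ≤ ∑ z ∈ s, (nz z - 1) := by
        refine Finset.sum_le_sum fun z hzs => ?_
        have h1 := hse z hzs
        have h2 : 1 ≤ nz z := hnz1 z (by rw [← hs]; exact Ideal.subset_span hzs)
        omega
      rw [hsum] at hle
      simp only [Finset.card_univ, Fintype.card_fin] at hle
      omega
  · calc I * J ^ (N - 1) ≤ J * J ^ (N - 1) := Ideal.mul_mono hIJ le_rfl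
      _ = J ^ N := by rw [← pow_succ', hNs]
end
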